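/- arXiv:2205.00597 — 5 statements merged into one kernel-verified Lean document; each statement's English description precedes it below -/
import Mathlib

section
/- If there exists a generalized (n × m, K, 1)-perfect difference packing, then there exists an (nm, K, 1)-perfect difference packing with the same number of base blocks. In particular, the map τ(x,y) = x + yn sends [n] × [m] bijectively to [nm] and preserves the difference structure. -/
open Finset

/-- The multiset of differences of a finite subset of `ℤ × ℤ`. -/
def diffs2 (B : Finset (ℤ × ℤ)) : Multiset (ℤ × ℤ) :=
  ((B ×ˢ B).filter (fun p => p.1 ≠ p.2)).val.map
    (fun p => (p.1.1 - p.2.1, p.1.2 - p.2.2))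

/-- The multiset of differences of a finite subset of `ℤ`. -/
def diffs1 (B : Finset ℤ) : Multiset ℤ :=
  ((B ×ˢ B).filter (fun p => p.1 ≠ p.2)).val.map (fun p => p.1 - p.2)

/-- `[v] = [-(v-1)/2, (v-1)/2]` for odd `v`. -/
noncomputable def iv (v : ℕ) : Finset ℤ := Finset.Icc (-(((v : ℤ) - 1) / 2)) (((v : ℤ) - 1) / 2)

/-- `[n] × [m]`. -/
noncomputable def grid (n m : ℕ) : Finset (ℤ × ℤ) := iv n ×ˢ iv m

/-- A generalized `(n × m, K, 1)`-perfect difference packing: base blocks lie in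
`[n] × [m]`, have sizes from `K`, and the multiset of differences `Δ𝓑` lies in
`[n] × [m]` and covers each element at most once. -/
def IsGenPDP (n m : ℕ) (K : Set ℕ) (𝓑 : Multiset (Finset (ℤ × ℤ))) : Prop :=
  (∀ B ∈ 𝓑, B.card ∈ K ∧ B ⊆ grid n m) ∧
  (∀ v ∈ (𝓑.map diffs2).sum, v ∈ grid n m) ∧
  (∀ v : ℤ × ℤ, ((𝓑.map diffs2).sum.count v ≤ 1))

/-- A `(v, K, 1)`-perfect difference packing on `[v]`. -/
def IsPDP1 (v : ℕ) (K : Set ℕ) (𝓒 : Multiset (Finset ℤ)) : Prop :=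
  (∀ C ∈ 𝓒, C.card ∈ K ∧ C ⊆ iv v) ∧
  (∀ d ∈ (𝓒.map diffs1).sum, d ∈ iv v) ∧
  (∀ d : ℤ, ((𝓒.map diffs1).sum.count d ≤ 1))

lemma mprod_map {α β γ δ : Type*} (s : Multiset α) (t : Multiset β) (f : α → γ) (g : β → δ) :
    (s.map f) ×ˢ (t.map g) = (s ×ˢ t).map (Prod.map f g) := by
  simp [SProd.sprod, Multiset.product, Multiset.bind_map, Multiset.map_bind,
    Multiset.map_map, Function.comp_def]

lemma sum_map_map {α : Type*} (S : Multiset (Multiset (ℤ × ℤ))) (f : ℤ × ℤ → α) :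
    (S.map (fun s => s.map f)).sum = (S.sum).map f := by
  induction S using Multiset.induction with
  | empty => simp
  | cons a s ih => simp [ih]

lemma diffs1_image (n : ℕ) (B : Finset (ℤ × ℤ))
    (hinj : Set.InjOn (fun p : ℤ × ℤ => p.1 + p.2 * n) ↑B) :
    diffs1 (B.image (fun p : ℤ × ℤ => p.1 + p.2 * n)) =
      (diffs2 B).map (fun p : ℤ × ℤ => p.1 + p.2 * n) := by
  set τ : ℤ × ℤ → ℤ := fun p => p.1 + p.2 * n with hτ
  unfold diffs1 diffs2
  rw [Finset.filter_val, Finset.product_val, Finset.image_val_of_injOn hinj,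
    mprod_map, Finset.filter_val, Finset.product_val, Multiset.filter_map,
    Multiset.map_map, Multiset.map_map]
  have : ∀ p ∈ (B.val ×ˢ B.val),
      ((fun p : ℤ×ℤ => p.1 ≠ p.2) ∘ Prod.map τ τ) p ↔ (p.1 ≠ p.2) := by
    intro p hp
    obtain ⟨h1m, h2m⟩ := Multiset.mem_product.mp hp
    simp only [Function.comp_apply, Prod.map_fst, Prod.map_snd, ne_eq]
    constructor
    · intro h1 h2; exact h1 (by rw [h2])
    · intro h1 h2; exact h1 (hinj h1m h2m h2)
  rw [Multiset.filter_congr this]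
  apply Multiset.map_congr rfl
  intro p hp
  simp only [Function.comp_apply, hτ, Prod.map]
  ring

/-- If there is a generalized `(n × m, K, 1)`-PDP, then there is an
`(nm, K, 1)`-PDP with the same number of base blocks; in particular the map
`τ(x,y) = x + y·n` sends `[n] × [m]` bijectively onto `[nm]`. -/
theorem stmt2 (n m : ℕ) (hn : Odd n) (hm : Odd m) (K : Set ℕ)
    (𝓑 : Multiset (Finset (ℤ × ℤ))) (h : IsGenPDP n m K 𝓑) :
    (∃ 𝓒 : Multiset (Finset ℤ),
      IsPDP1 (n * m) K 𝓒 ∧ Multiset.card 𝓒 = Multiset.card 𝓑) ∧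
    Set.BijOn (fun p : ℤ × ℤ => p.1 + p.2 * n) (grid n m) (iv (n * m)) := by
  obtain ⟨a, ha⟩ := hn
  obtain ⟨b, hb⟩ := hm
  set τ : ℤ × ℤ → ℤ := fun p => p.1 + p.2 * n with hτ
  have hA : ((n : ℤ) - 1) / 2 = (a : ℤ) := by
    subst ha; push_cast; omega
  have hB : ((m : ℤ) - 1) / 2 = (b : ℤ) := by
    subst hb; push_cast; omega
  have hAB : (((n * m : ℕ) : ℤ) - 1) / 2 = (a : ℤ) + (n : ℤ) * b := by
    subst ha hb; push_cast; ring_nf; omega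
  have hgrid : ∀ p : ℤ × ℤ, p ∈ grid n m ↔
      (-(a:ℤ) ≤ p.1 ∧ p.1 ≤ a ∧ -(b:ℤ) ≤ p.2 ∧ p.2 ≤ b) := by
    intro p
    simp only [grid, iv, Finset.mem_product, Finset.mem_Icc, hA, hB]
    tauto
  have hiv : ∀ z : ℤ, z ∈ iv (n * m) ↔
      (-((a:ℤ) + n * b) ≤ z ∧ z ≤ (a:ℤ) + n * b) := by
    intro z; simp only [iv, Finset.mem_Icc, hAB]
  have hnpos : (0:ℤ) < n := by omega
  -- maps to
  have hmaps : ∀ p ∈ grid n m, τ p ∈ iv (n * m) := by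
    intro p hp
    rw [hgrid] at hp
    rw [hiv]
    have h1 : p.2 * n ≤ (b : ℤ) * n := by nlinarith
    have h2 : -((b : ℤ) * n) ≤ p.2 * n := by nlinarith
    constructor <;> simp only [hτ] <;> nlinarith
  -- injective on grid
  have hinj : Set.InjOn τ ↑(grid n m) := by
    intro p hp q hq hpq
    simp only [Finset.mem_coe] at hp hq
    rw [hgrid] at hp hq
    simp only [hτ] at hpq
    have hd : (p.2 - q.2) * n = q.1 - p.1 := by linarith
    have h2 : p.2 = q.2 := by
      rcases lt_trichotomy p.2 q.2 with hlt | he | hgt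
      · exfalso
        have : (p.2 - q.2) * n ≤ -1 * n :=
          mul_le_mul_of_nonneg_right (by omega) (by omega)
        omega
      · exact he
      · exfalso
        have : 1 * (n:ℤ) ≤ (p.2 - q.2) * n :=
          mul_le_mul_of_nonneg_right (by omega) (by omega)
        omega
    have h1 : p.1 = q.1 := by rw [h2] at hpq; linarith
    exact Prod.ext h1 h2
  -- surjective on grid
  have hsurj : ∀ z ∈ iv (n * m), ∃ p ∈ grid n m, τ p = z := by
    intro z hz
    rw [hiv] at hz
    refine ⟨((z + a) % n - a, (z + a) / n), ?_, ?_⟩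
    · rw [hgrid]
      have h1 : 0 ≤ (z + a) % n := Int.emod_nonneg _ (by omega)
      have h2 : (z + a) % n < n := Int.emod_lt_of_pos _ hnpos
      refine ⟨by omega, by omega, ?_, ?_⟩
      · exact (Int.le_ediv_iff_mul_le hnpos).mpr (by nlinarith)
      · have : (z + a) / n < (b:ℤ) + 1 :=
          (Int.ediv_lt_iff_lt_mul hnpos).mpr (by nlinarith)
        omega
    · simp only [hτ]
      have := Int.emod_add_mul_ediv (z + a) n
      linarith [mul_comm ((z + a) / n) (n:ℤ)]
  have hbij : Set.BijOn τ (grid n m) (iv (n * m)) := by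
    refine ⟨fun p hp => hmaps p hp, hinj, fun z hz => ?_⟩
    obtain ⟨p, hp, hpz⟩ := hsurj z hz
    exact ⟨p, hp, hpz⟩
  refine ⟨?_, hbij⟩
  obtain ⟨hblocks, hmem, hcount⟩ := h
  refine ⟨𝓑.map (fun B => B.image τ), ⟨?_, ?_, ?_⟩, by simp⟩
  · -- blocks
    intro C hC
    obtain ⟨B, hB, rfl⟩ := Multiset.mem_map.mp hC
    obtain ⟨hK, hsub⟩ := hblocks B hB
    have hinjB : Set.InjOn τ ↑B := hinj.mono (by exact_mod_cast hsub)
    constructor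
    · rwa [Finset.card_image_of_injOn hinjB]
    · intro z hz
      obtain ⟨p, hp, rfl⟩ := Finset.mem_image.mp hz
      exact hmaps p (hsub hp)
  · -- differences in range
    intro d hd
    have key : ((𝓑.map (fun B => B.image τ)).map diffs1).sum =
        ((𝓑.map diffs2).sum).map τ := by
      rw [Multiset.map_map, ← sum_map_map, Multiset.map_map]
      congr 1
      apply Multiset.map_congr rfl
      intro B hB
      exact diffs1_image n B (hinj.mono (by exact_mod_cast (hblocks B hB).2))
    rw [key] at hd
    obtain ⟨v, hv, rfl⟩ := Multiset.mem_map.mp hd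
    exact hmaps v (hmem v hv)
  · -- count ≤ 1
    intro d
    have key : ((𝓑.map (fun B => B.image τ)).map diffs1).sum =
        ((𝓑.map diffs2).sum).map τ := by
      rw [Multiset.map_map, ← sum_map_map, Multiset.map_map]
      congr 1
      apply Multiset.map_congr rfl
      intro B hB
      exact diffs1_image n B (hinj.mono (by exact_mod_cast (hblocks B hB).2))
    rw [key, Multiset.count_map]
    set S := (𝓑.map diffs2).sum with hS
    by_cases hex : ∃ v ∈ grid n m, τ v = d
    · obtain ⟨v₀, hv₀, hv₀d⟩ := hex
      have : Multiset.filter (fun a => d = τ a) S = Multiset.filter (fun a => a = v₀) S := by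
        apply Multiset.filter_congr
        intro x hx
        have hxg := hmem x hx
        constructor
        · intro hdx
          exact hinj (Finset.mem_coe.mpr hxg) (Finset.mem_coe.mpr hv₀) (by rw [← hdx, hv₀d])
        · intro hxv; rw [hxv, hv₀d]
      rw [this]
      have : Multiset.filter (fun a => a = v₀) S = Multiset.filter (fun a => v₀ = a) S :=
        Multiset.filter_congr (fun x _ => eq_comm)
      rw [this, ← Multiset.count_eq_card_filter_eq]
      exact hcount v₀
    · rw [Multiset.filter_eq_nil.mpr]
      · simp
      · intro x hx hdx
        exact hex ⟨x, hmem x hx, hdx.symm⟩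
end

section
/- There is no generalized (3 × m, {3,4,5}, 1)-perfect difference family for any odd m ≥ 1. -/
open Finset

/-- A generalized `(n × m, K, 1)`-perfect difference family: blocks in `[n] × [m]`
with sizes in `K` whose multiset of within-block differences covers each element
of `[n] × [m] \ {(0,0)}` exactly once. -/
def IsGenPDF (n m : ℕ) (K : Set ℕ) (𝓑 : Multiset (Finset (ℤ × ℤ))) : Prop :=
  (∀ B ∈ 𝓑, B.card ∈ K ∧ B ⊆ grid n m) ∧
  (𝓑.map diffs2).sum = (grid n m).val.erase (0, 0)

lemma my_card_sum {α : Type*} (S : Multiset (Multiset α)) :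
    Multiset.card S.sum = (S.map Multiset.card).sum := by
  induction S using Multiset.induction with
  | empty => simp
  | cons a s ih => simp [ih]

lemma my_countP_sum {α : Type*} (p : α → Prop) [DecidablePred p]
    (S : Multiset (Multiset α)) :
    S.sum.countP p = (S.map (Multiset.countP p)).sum := by
  induction S using Multiset.induction with
  | empty => simp
  | cons a s ih => simp [ih]

lemma my_sum_map_le {α : Type*} (s : Multiset α) (f g : α → ℕ)
    (h : ∀ b ∈ s, f b ≤ g b) : (s.map f).sum ≤ (s.map g).sum := by
  induction s using Multiset.induction with
  | empty => simp
  | cons a t ih =>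
      simp only [Multiset.map_cons, Multiset.sum_cons]
      exact Nat.add_le_add (h a (Multiset.mem_cons_self a t))
        (ih fun b hb => h b (Multiset.mem_cons_of_mem hb))

lemma my_numeric (s t k : ℕ) (hk : k = 3 ∨ k = 4 ∨ k = 5) (hst : s + t = k) :
    k * k - k ≤ 3 * ((s * s - s) + (t * t - t)) := by
  rcases hk with rfl | rfl | rfl <;>
    (have hs : s ≤ 5 := by omega
     have ht : t ≤ 5 := by omega
     interval_cases s <;> interval_cases t <;> omega)

/-- There is no generalized `(3 × m, {3,4,5}, 1)`-PDF for any odd `m`. -/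
theorem stmt7 (m : ℕ) (hm : Odd m) :
    ¬ ∃ 𝓑 : Multiset (Finset (ℤ × ℤ)), IsGenPDF 3 m ({3, 4, 5} : Set ℕ) 𝓑 := by
  rintro ⟨𝓑, h1, h2⟩
  obtain ⟨r, hr⟩ := hm
  set T : Multiset (ℤ × ℤ) := (grid 3 m).val.erase (0, 0) with hT
  -- basic facts about the grid
  have hivm : (iv m).card = m := by
    rw [iv, Int.card_Icc]
    have : (m : ℤ) = 2 * r + 1 := by exact_mod_cast hr
    omega
  have hiv3 : iv 3 = Finset.Icc (-1 : ℤ) 1 := by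
    norm_num [iv]
  have hgridcard : (grid 3 m).card = 3 * m := by
    rw [grid, Finset.card_product, hivm, hiv3, Int.card_Icc]
    norm_num
    exact Or.inl rfl
  have hzero : ((0 : ℤ), (0 : ℤ)) ∈ grid 3 m := by
    rw [grid, Finset.mem_product, hiv3, Finset.mem_Icc, iv, Finset.mem_Icc]
    have : (m : ℤ) = 2 * r + 1 := by exact_mod_cast hr
    omega
  have hzero' : ((0 : ℤ), (0 : ℤ)) ∈ (grid 3 m).val := hzero
  -- cardinality of T
  have hcardT : Multiset.card T + 1 = 3 * m := by
    have h0 := Multiset.card_erase_of_mem hzero'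
    have h3 : Multiset.card (grid 3 m).val = 3 * m := hgridcard
    rw [hT, h0, h3]
    exact Nat.succ_pred_eq_of_pos (by omega)
  -- count of elements with first coordinate 0 in T
  have hcountT : T.countP (fun p => p.1 = 0) + 1 = m := by
    have hco : ((0, 0) ::ₘ T) = (grid 3 m).val := Multiset.cons_erase hzero'
    have h4 : ((grid 3 m).val).countP (fun p : ℤ × ℤ => p.1 = 0) = m := by
      have hfe : (grid 3 m).filter (fun p : ℤ × ℤ => p.1 = 0)
          = ({(0 : ℤ)} : Finset ℤ) ×ˢ iv m := by
        ext ⟨x, y⟩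
        simp only [grid, Finset.mem_filter, Finset.mem_product, hiv3, Finset.mem_Icc,
          Finset.mem_singleton, iv]
        constructor
        · rintro ⟨⟨_, _⟩, h⟩; exact ⟨h, by omega, by omega⟩
        · rintro ⟨h, h1, h2⟩; exact ⟨⟨by omega, by omega⟩, h⟩
      have hc : ((grid 3 m).filter (fun p : ℤ × ℤ => p.1 = 0)).card = m := by
        rw [hfe, Finset.card_product, Finset.card_singleton, one_mul, hivm]
      rw [Multiset.countP_eq_card_filter]
      exact hc
    have h5 : (((0, 0) ::ₘ T)).countP (fun p : ℤ × ℤ => p.1 = 0)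
        = T.countP (fun p : ℤ × ℤ => p.1 = 0) + 1 := by
      rw [Multiset.countP_cons_of_pos]
      rfl
    rw [hco, h4] at h5
    omega
  -- per-block inequality
  have hblock : ∀ B ∈ 𝓑,
      Multiset.card (diffs2 B) ≤ 3 * (diffs2 B).countP (fun p => p.1 = 0) := by
    intro B hB
    obtain ⟨hk, -⟩ := h1 B hB
    simp only [Set.mem_insert_iff, Set.mem_singleton_iff] at hk
    -- every difference lies in T
    have hdT : ∀ d ∈ diffs2 B, d ∈ T := by
      intro d hd
      have h6 : diffs2 B ∈ 𝓑.map diffs2 := Multiset.mem_map_of_mem diffs2 hB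
      have h7 : diffs2 B ≤ (𝓑.map diffs2).sum := Multiset.le_sum_of_mem h6
      rw [h2] at h7
      exact Multiset.mem_of_le h7 hd
    -- first coordinates of points in B differ by at most 1
    have hfst : ∀ p ∈ B, ∀ q ∈ B, p ≠ q → -1 ≤ p.1 - q.1 ∧ p.1 - q.1 ≤ 1 := by
      intro p hp q hq hne
      have hd : (p.1 - q.1, p.2 - q.2) ∈ diffs2 B := by
        rw [diffs2, Multiset.mem_map]
        refine ⟨(p, q), ?_, rfl⟩
        rw [Finset.mem_val, Finset.mem_filter, Finset.mem_product]
        exact ⟨⟨hp, hq⟩, hne⟩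
      have h8 := hdT _ hd
      have h9 : (p.1 - q.1, p.2 - q.2) ∈ (grid 3 m).val :=
        Multiset.mem_of_mem_erase h8
      rw [Finset.mem_val, grid, Finset.mem_product, hiv3, Finset.mem_Icc] at h9
      exact h9.1
    have hBne : B.Nonempty := by
      rw [← Finset.card_pos]; omega
    have hFne : (B.image Prod.fst).Nonempty := hBne.image _
    set a : ℤ := (B.image Prod.fst).min' hFne with ha
    obtain ⟨q, hqB, hqa⟩ := Finset.mem_image.mp ((B.image Prod.fst).min'_mem hFne)
    have himg : ∀ x ∈ B, x.1 = a ∨ x.1 = a + 1 := by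
      intro x hx
      have hge : a ≤ x.1 := Finset.min'_le _ _ (Finset.mem_image_of_mem _ hx)
      by_cases hxq : x = q
      · left; rw [hxq, hqa]
      · have := hfst x hx q hqB hxq
        omega
    set B0 := B.filter (fun x => x.1 = a) with hB0
    set B1 := B.filter (fun x => x.1 = a + 1) with hB1
    have hst : B0.card + B1.card = B.card := by
      have hne : B.filter (fun x => ¬ x.1 = a) = B1 := by
        apply Finset.filter_congr
        intro x hx
        have := himg x hx
        omega
      rw [hB0, ← hne]
      exact Finset.card_filter_add_card_filter_not _
    -- total number of differences
    have hcard : Multiset.card (diffs2 B) = B.card * B.card - B.card := by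
      rw [diffs2, Multiset.card_map]
      have : ((B ×ˢ B).filter (fun p => p.1 ≠ p.2)) = B.offDiag := by ext x; simp [Finset.mem_offDiag, and_assoc]
      rw [this]
      have := Finset.offDiag_card (s := B)
      rw [← Finset.card_def]
      exact this
    -- lower bound on zero-first-coordinate differences
    have hcount : (B0.card * B0.card - B0.card) + (B1.card * B1.card - B1.card)
        ≤ (diffs2 B).countP (fun p => p.1 = 0) := by
      have hrw : (diffs2 B).countP (fun p => p.1 = 0)
          = (B.offDiag.filter (fun p : (ℤ × ℤ) × (ℤ × ℤ) => p.1.1 - p.2.1 = 0)).card := by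
        rw [diffs2, Multiset.countP_map]
        have : ((B ×ˢ B).filter (fun p => p.1 ≠ p.2)) = B.offDiag := by ext x; simp [Finset.mem_offDiag, and_assoc]
        rw [this]
        rfl
      rw [hrw]
      have hsub : B0.offDiag ∪ B1.offDiag
          ⊆ B.offDiag.filter (fun p : (ℤ × ℤ) × (ℤ × ℤ) => p.1.1 - p.2.1 = 0) := by
        intro x hx
        rw [Finset.mem_union] at hx
        rw [Finset.mem_filter, Finset.mem_offDiag]
        rcases hx with hx | hx
        · rw [Finset.mem_offDiag] at hx
          obtain ⟨hx1, hx2, hx3⟩ := hx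
          rw [hB0, Finset.mem_filter] at hx1 hx2
          exact ⟨⟨hx1.1, hx2.1, hx3⟩, by rw [hx1.2, hx2.2]; ring⟩
        · rw [Finset.mem_offDiag] at hx
          obtain ⟨hx1, hx2, hx3⟩ := hx
          rw [hB1, Finset.mem_filter] at hx1 hx2
          exact ⟨⟨hx1.1, hx2.1, hx3⟩, by rw [hx1.2, hx2.2]; ring⟩
      have hdisj : Disjoint B0.offDiag B1.offDiag := by
        rw [Finset.disjoint_left]
        intro x hx hx'
        rw [Finset.mem_offDiag] at hx hx'
        have h1' := hx.1; have h2' := hx'.1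
        rw [hB0, Finset.mem_filter] at h1'
        rw [hB1, Finset.mem_filter] at h2'
        omega
      calc (B0.card * B0.card - B0.card) + (B1.card * B1.card - B1.card)
          = B0.offDiag.card + B1.offDiag.card := by
            rw [Finset.offDiag_card, Finset.offDiag_card]
        _ = (B0.offDiag ∪ B1.offDiag).card := (Finset.card_union_of_disjoint hdisj).symm
        _ ≤ _ := Finset.card_le_card hsub
    -- finish numerically
    refine le_trans (le_of_eq hcard) (le_trans ?_ (Nat.mul_le_mul_left 3 hcount))
    exact my_numeric _ _ _ hk hst
  -- sum up
  have hsum1 : Multiset.card T = (𝓑.map (fun B => Multiset.card (diffs2 B))).sum := by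
    rw [← h2, my_card_sum, Multiset.map_map]
    rfl
  have hsum2 : T.countP (fun p => p.1 = 0)
      = (𝓑.map (fun B => (diffs2 B).countP (fun p => p.1 = 0))).sum := by
    rw [← h2, my_countP_sum, Multiset.map_map]
    rfl
  have hle := my_sum_map_le 𝓑 (fun B => Multiset.card (diffs2 B))
    (fun B => 3 * (diffs2 B).countP (fun p => p.1 = 0)) hblock
  have hmul : (𝓑.map (fun B => 3 * (diffs2 B).countP (fun p => p.1 = 0))).sum
      = 3 * (𝓑.map (fun B => (diffs2 B).countP (fun p => p.1 = 0))).sum :=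
    Multiset.sum_map_mul_left
  rw [hmul, ← hsum2] at hle
  rw [← hsum1] at hle
  omega
end

section
/- A Langford sequence of order n and defect d exists only if n ≥ 2d − 1 and (n ≡ 0 or 1 (mod 4) when d is odd, n ≡ 0 or 3 (mod 4) when d is even). (Necessity direction: summing b_i − a_i over all pairs and summing all elements of [1, 2n] yields these congruence and inequality conditions.) -/
open Finset

/-- A Langford sequence of order `n` and defect `d`: a partition of `[1, 2n]`
into `n` ordered pairs `(aᵢ, bᵢ)` with `aᵢ < bᵢ` such that the differences
`bᵢ - aᵢ` are exactly `d, d+1, …, d+n-1`. -/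
def IsLangford (n d : ℕ) (f : Fin n → ℤ × ℤ) : Prop :=
  (∀ i, (f i).1 < (f i).2) ∧
  (Finset.univ.val.map (fun i => (f i).1) + Finset.univ.val.map (fun i => (f i).2)) =
      (Finset.Icc (1 : ℤ) (2 * n)).val ∧
  Finset.univ.val.map (fun i => (f i).2 - (f i).1) =
      (Finset.Icc (d : ℤ) ((d : ℤ) + n - 1)).val

/-- Gauss sum for integer intervals. -/
lemma sum_Icc_int (a : ℤ) : ∀ m : ℕ, 2 * ∑ x ∈ Finset.Icc a (a + m - 1), x = m * (2 * a + m - 1)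
  | 0 => by
    rw [Finset.Icc_eq_empty (by omega)]
    simp
  | (m + 1) => by
    have hins : Finset.Icc a (a + (m + 1 : ℕ) - 1) =
        insert (a + m) (Finset.Icc a (a + m - 1)) := by
      ext x
      simp only [Finset.mem_Icc, Finset.mem_insert]
      push_cast
      omega
    have hnm : (a + (m : ℤ)) ∉ Finset.Icc a (a + m - 1) := by
      simp only [Finset.mem_Icc]
      omega
    rw [hins, Finset.sum_insert hnm, mul_add, sum_Icc_int a m]
    push_cast
    ring

/-- The sum of `c` distinct integers, all at least `k`, is at least
`c*(2k+c-1)/2`. -/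
lemma sum_distinct_ge : ∀ (c : ℕ) (k : ℤ) (s : Finset ℤ), s.card = c →
    (∀ x ∈ s, k ≤ x) → (c : ℤ) * (2 * k + c - 1) ≤ 2 * ∑ x ∈ s, x
  | 0 => by
    intro k s hc _
    rw [Finset.card_eq_zero.mp hc]
    simp
  | (c + 1) => by
    intro k s hc hk
    have hne : s.Nonempty := Finset.card_pos.mp (by omega)
    set m := s.min' hne with hm_def
    have hm : m ∈ s := s.min'_mem hne
    have hcard : (s.erase m).card = c := by
      rw [Finset.card_erase_of_mem hm, hc]
      omega
    have hrest : ∀ x ∈ s.erase m, m + 1 ≤ x := by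
      intro x hx
      have h1 := s.min'_le x (Finset.mem_of_mem_erase hx)
      have h2 : x ≠ m := Finset.ne_of_mem_erase hx
      omega
    have ih := sum_distinct_ge c (m + 1) (s.erase m) hcard hrest
    have hsum : ∑ x ∈ s, x = m + ∑ x ∈ s.erase m, x :=
      (Finset.add_sum_erase s id hm).symm
    have hkm : k ≤ m := hk m hm
    push_cast at ih ⊢
    nlinarith [ih, hsum, hkm]

/-- A Langford sequence of order `n` and defect `d` exists only if `n ≥ 2d - 1`
and `n ≡ 0, 1 (mod 4)` when `d` is odd, `n ≡ 0, 3 (mod 4)` when `d` is even. -/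
theorem stmt14 (n d : ℕ) (hd : 1 ≤ d) (hnd : d < n)
    (hL : ∃ f : Fin n → ℤ × ℤ, IsLangford n d f) :
    2 * d - 1 ≤ n ∧
    (Odd d → n % 4 = 0 ∨ n % 4 = 1) ∧
    (Even d → n % 4 = 0 ∨ n % 4 = 3) := by
  obtain ⟨f, _, h2, h3⟩ := hL
  set S : ℤ := ∑ i, (f i).1 with hS
  set T : ℤ := ∑ i, (f i).2 with hT
  -- Sum of all elements
  have e1 : 2 * (S + T) = (2 * n) * (2 * (n : ℤ) + 1) := by
    have := congrArg Multiset.sum h2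
    rw [Multiset.sum_add] at this
    have hA : (Finset.univ.val.map (fun i => (f i).1)).sum = S := by
      rw [hS, Finset.sum_eq_multiset_sum]
    have hB : (Finset.univ.val.map (fun i => (f i).2)).sum = T := by
      rw [hT, Finset.sum_eq_multiset_sum]
    rw [hA, hB] at this
    have hIcc : ((Finset.Icc (1 : ℤ) (2 * n)).val).sum = ∑ x ∈ Finset.Icc (1 : ℤ) (2 * n), x := by
      rw [Finset.sum_eq_multiset_sum, Multiset.map_id']
    rw [hIcc] at this
    have hrw : Finset.Icc (1 : ℤ) (2 * n) = Finset.Icc (1 : ℤ) (1 + (2 * n : ℕ) - 1) := by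
      congr 1
      push_cast
      ring
    have := sum_Icc_int 1 (2 * n)
    rw [← hrw] at this
    push_cast at this ⊢
    rw [‹S + T = _›]
    linarith
  -- Sum of differences
  have e2 : 2 * (T - S) = (n : ℤ) * (2 * d + n - 1) := by
    have := congrArg Multiset.sum h3
    have hD : (Finset.univ.val.map (fun i => (f i).2 - (f i).1)).sum = T - S := by
      rw [hS, hT, ← Finset.sum_sub_distrib, Finset.sum_eq_multiset_sum]
    rw [hD] at this
    have hIcc : ((Finset.Icc (d : ℤ) ((d : ℤ) + n - 1)).val).sum =
        ∑ x ∈ Finset.Icc (d : ℤ) ((d : ℤ) + n - 1), x := by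
      rw [Finset.sum_eq_multiset_sum, Multiset.map_id']
    rw [hIcc] at this
    have := this ▸ sum_Icc_int (d : ℤ) n
    linarith [sum_Icc_int (d : ℤ) n, this]
  -- The `a`s are distinct and at least 1
  have e3 : (n : ℤ) * ((n : ℤ) + 1) ≤ 2 * S := by
    set A : Multiset ℤ := Finset.univ.val.map (fun i => (f i).1) with hA_def
    have hle : A ≤ (Finset.Icc (1 : ℤ) (2 * n)).val := by
      rw [← h2]
      exact Multiset.le_add_right _ _
    have hnodup : A.Nodup := Multiset.nodup_of_le hle (Finset.Icc (1 : ℤ) (2 * n)).nodup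
    set sA : Finset ℤ := ⟨A, hnodup⟩ with hsA_def
    have hcard : sA.card = n := by
      show A.card = n
      rw [hA_def, Multiset.card_map]
      simp
    have hmem : ∀ x ∈ sA, (1 : ℤ) ≤ x := by
      intro x hx
      have : x ∈ (Finset.Icc (1 : ℤ) (2 * n)).val := Multiset.mem_of_le hle hx
      exact (Finset.mem_Icc.mp this).1
    have := sum_distinct_ge n 1 sA hcard hmem
    have hsum : ∑ x ∈ sA, x = S := by
      rw [Finset.sum_eq_multiset_sum, Multiset.map_id', hS, Finset.sum_eq_multiset_sum]
    rw [hsum] at this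
    linarith
  have hnpos : (0 : ℤ) < n := by exact_mod_cast Nat.pos_of_ne_zero (by omega)
  have e4 : 4 * S = (n : ℤ) * (3 * n + 3 - 2 * d) := by
    have hr : (2 * (n : ℤ)) * (2 * n + 1) - n * (2 * d + n - 1) = n * (3 * n + 3 - 2 * d) := by
      ring
    linarith
  -- inequality
  have hineq : 2 * d - 1 ≤ n := by
    have h1 : (n : ℤ) * (2 * ((n : ℤ) + 1)) ≤ (n : ℤ) * (3 * n + 3 - 2 * d) := by
      have : (n : ℤ) * (2 * ((n : ℤ) + 1)) = 2 * ((n : ℤ) * (n + 1)) := by ring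
      linarith
    have h2' := le_of_mul_le_mul_left h1 hnpos
    have hcast : 2 * (d : ℤ) ≤ (n : ℤ) + 1 := by linarith
    have : 2 * d ≤ n + 1 := by exact_mod_cast hcast
    omega
  refine ⟨hineq, ?_, ?_⟩
  · rintro ⟨e, he⟩
    by_contra hcon
    push_neg at hcon
    have hdvd : (4 : ℤ) ∣ (n : ℤ) * (3 * n + 3 - 2 * d) := ⟨S, e4.symm⟩
    obtain ⟨z, hz⟩ := hdvd
    have hr : n % 4 = 2 ∨ n % 4 = 3 := by omega
    rcases hr with hr | hr
    · obtain ⟨q, hq⟩ : ∃ q, n = 4 * q + 2 := ⟨n / 4, by omega⟩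
      have key : (n : ℤ) * (3 * n + 3 - 2 * d) =
          4 * (12 * (q : ℤ) * q + 13 * q - 4 * q * e - 2 * e) + 14 := by
        rw [hq, he]; push_cast; ring
      rw [key] at hz
      omega
    · obtain ⟨q, hq⟩ : ∃ q, n = 4 * q + 3 := ⟨n / 4, by omega⟩
      have key : (n : ℤ) * (3 * n + 3 - 2 * d) =
          4 * (12 * (q : ℤ) * q + 19 * q - 4 * q * e - 3 * e) + 30 := by
        rw [hq, he]; push_cast; ring
      rw [key] at hz
      omega
  · rintro ⟨e, he⟩
    by_contra hcon
    push_neg at hcon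
    have hdvd : (4 : ℤ) ∣ (n : ℤ) * (3 * n + 3 - 2 * d) := ⟨S, e4.symm⟩
    obtain ⟨z, hz⟩ := hdvd
    have hr : n % 4 = 1 ∨ n % 4 = 2 := by omega
    have he' : d = 2 * e := by omega
    rcases hr with hr | hr
    · obtain ⟨q, hq⟩ : ∃ q, n = 4 * q + 1 := ⟨n / 4, by omega⟩
      have key : (n : ℤ) * (3 * n + 3 - 2 * d) =
          4 * (12 * (q : ℤ) * q + 9 * q - 4 * q * e - e) + 6 := by
        rw [hq, he']; push_cast; ring
      rw [key] at hz
      omega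
    · obtain ⟨q, hq⟩ : ∃ q, n = 4 * q + 2 := ⟨n / 4, by omega⟩
      have key : (n : ℤ) * (3 * n + 3 - 2 * d) =
          4 * (12 * (q : ℤ) * q + 15 * q - 4 * q * e - 2 * e) + 18 := by
        rw [hq, he']; push_cast; ring
      rw [key] at hz
      omega
end

section
/- Suppose 𝓐 is an (n, K, 1)-PDP with leave H^r on [n], and for each k ∈ K there is an L-SPGDD of type m^k. Then there exists a generalized (n × m, L, 1)-PDP with leave H^r × [m]: replacing each base block A ∈ 𝓐 by an L-SPGDD of type m^{|A|} on A × [m] yields base blocks whose combined difference list equals ([n] \ H^r) × [m]. -/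
open Finset

/-- `Δ_{ij}` of a collection of blocks in `ℤ × ℤ`. -/
def deltaIJ (i j : ℤ) (𝓕 : Multiset (Finset (ℤ × ℤ))) : Multiset ℤ :=
  (𝓕.map (fun B =>
    ((B ×ˢ B).filter (fun p => p.1.1 = i ∧ p.2.1 = j ∧ p.1 ≠ p.2)).val.map
      (fun p => p.1.2 - p.2.2))).sum

/-- An `L`-SPGDD of type `m^|A|` on `A × [m]`: base blocks lie in `A × [m]` with
sizes in `L`, `Δ_{ij}(𝓕) = [m]` for distinct `i, j ∈ A`, and `Δ_{ii}(𝓕) = ∅`. -/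
def IsSPGDDon (A : Finset ℤ) (m : ℕ) (L : Set ℕ)
    (𝓕 : Multiset (Finset (ℤ × ℤ))) : Prop :=
  (∀ B ∈ 𝓕, B.card ∈ L ∧ ∀ p ∈ B, p.1 ∈ A ∧ p.2 ∈ iv m) ∧
  (∀ i ∈ A, ∀ j ∈ A,
    (i ≠ j → deltaIJ i j 𝓕 = (iv m).val) ∧ (i = j → deltaIJ i j 𝓕 = 0))

section helpers

variable {α β γ : Type*}

/-- Bind distributes over a multiset sum of multisets. -/
lemma msum_bind (S : Multiset (Multiset α)) (F : α → Multiset β) :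
    S.sum.bind F = (S.map (fun s => s.bind F)).sum := by
  induction S using Multiset.induction with
  | empty => simp
  | cons s S ih => simp [Multiset.add_bind, ih]

/-- Map distributes over a multiset sum of multisets. -/
lemma map_msum (f : α → β) (S : Multiset (Multiset α)) :
    S.sum.map f = (S.map (Multiset.map f)).sum := by
  induction S using Multiset.induction with
  | empty => simp
  | cons s S ih => simp [ih]

/-- A multiset sum of finset sums can be swapped. -/
lemma msum_finsum [AddCommMonoid γ] (s : Multiset α) (t : Finset β) (g : α → β → γ) :
    (s.map (fun a => ∑ b ∈ t, g a b)).sum = ∑ b ∈ t, (s.map (fun a => g a b)).sum := by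
  induction s using Multiset.induction with
  | empty => simp
  | cons a s ih => simp [ih, Finset.sum_add_distrib]

/-- Summing a multiset mapped over a bind. -/
lemma sum_map_bind [AddCommMonoid γ] (s : Multiset α) (f : α → Multiset β) (g : β → γ) :
    ((s.bind f).map g).sum = (s.map (fun a => ((f a).map g).sum)).sum := by
  induction s using Multiset.induction with
  | empty => simp
  | cons a s ih => simp [Multiset.cons_bind, ih]

/-- A multiset is partitioned by the fibers of a map into a finset. -/
lemma partition_filter [DecidableEq β] (s : Multiset α) (t : Finset β)
    (f : α → β) (h : ∀ a ∈ s, f a ∈ t) :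
    ∑ b ∈ t, s.filter (fun a => f a = b) = s := by
  induction s using Multiset.induction with
  | empty => simp
  | cons a s ih =>
    have ha : f a ∈ t := h a (Multiset.mem_cons_self a s)
    have h' : ∀ x ∈ s, f x ∈ t := fun x hx => h x (Multiset.mem_cons_of_mem hx)
    simp only [Multiset.filter_cons]
    rw [Finset.sum_add_distrib, ih h']
    have hsing : ∑ b ∈ t, (if f a = b then ({a} : Multiset α) else 0) = {a} := by
      simp [Finset.sum_ite_eq t (f a) (fun _ => ({a} : Multiset α)), ha]
    rw [hsing, Multiset.singleton_add]

/-- A finset sum of multisets is a bind. -/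
lemma finsum_eq_bind (t : Finset α) (g : α → Multiset β) :
    ∑ a ∈ t, g a = t.val.bind g := rfl

end helpers

/-- Suppose `𝓐` is an `(n, K, 1)`-PDP with leave `H^r` on `[n]`, and for each
admissible block there is an `L`-SPGDD of type `m^k` on it. Then there is a
generalized `(n × m, L, 1)`-PDP with leave `H^r × [m]`: a collection of blocks in
`[n] × [m]` with sizes in `L` whose combined difference list equals
`([n] \ H^r) × [m]`. -/
theorem stmt18 (n m : ℕ) (hn : Odd n) (hm : Odd m) (K L : Set ℕ)
    (H : Finset ℤ) (r : ℤ) (𝓐 : Multiset (Finset ℤ))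
    (hA : ∀ A ∈ 𝓐, A.card ∈ K ∧ A ⊆ iv n)
    (hAdiff : (𝓐.map diffs1).sum = ((iv n) \ (H.image (r * ·))).val)
    (hsp : ∀ A : Finset ℤ, A.card ∈ K → A ⊆ iv n →
      ∃ 𝓕 : Multiset (Finset (ℤ × ℤ)), IsSPGDDon A m L 𝓕) :
    ∃ 𝓑 : Multiset (Finset (ℤ × ℤ)),
      (∀ B ∈ 𝓑, B.card ∈ L ∧ B ⊆ iv n ×ˢ iv m) ∧
      (𝓑.map diffs2).sum = (((iv n) \ (H.image (r * ·))) ×ˢ iv m).val := by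
  classical
  -- Choose an SPGDD for each admissible block.
  let f : Finset ℤ → Multiset (Finset (ℤ × ℤ)) := fun A =>
    if h : A.card ∈ K ∧ A ⊆ iv n then (hsp A h.1 h.2).choose else 0
  have hf : ∀ A ∈ 𝓐, IsSPGDDon A m L (f A) := by
    intro A hAm
    have h := hA A hAm
    simp only [f, dif_pos h]
    exact (hsp A h.1 h.2).choose_spec
  refine ⟨𝓐.bind f, ?_, ?_⟩
  · intro B hB
    obtain ⟨A, hAm, hBf⟩ := Multiset.mem_bind.mp hB
    obtain ⟨h1, h2⟩ := (hf A hAm).1 B hBf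
    refine ⟨h1, fun p hp => ?_⟩
    obtain ⟨hp1, hp2⟩ := h2 p hp
    exact Finset.mem_product.mpr ⟨(hA A hAm).2 hp1, hp2⟩
  · set F : ℤ → Multiset (ℤ × ℤ) := fun d => (iv m).val.map (fun e => (d, e)) with hF
    -- Key computation for a single base block `A`.
    have key : ∀ A ∈ 𝓐, ((f A).map diffs2).sum = (diffs1 A).bind F := by
      intro A hAm
      obtain ⟨hblocks, hdelta⟩ := hf A hAm
      -- Per-block decomposition of `diffs2` indexed by pairs of groups.
      have hblock : ∀ B ∈ f A, diffs2 B = ∑ q ∈ A ×ˢ A,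
          (((B ×ˢ B).filter (fun p => p.1.1 = q.1 ∧ p.2.1 = q.2 ∧ p.1 ≠ p.2)).val.map
            (fun p => p.1.2 - p.2.2)).map (fun e => (q.1 - q.2, e)) := by
        intro B hB
        have hmem : ∀ p ∈ ((B ×ˢ B).filter (fun p => p.1 ≠ p.2)).val,
            ((p.1.1, p.2.1) : ℤ × ℤ) ∈ A ×ˢ A := by
          intro p hp
          have hp' := Finset.mem_filter.mp hp
          have hpp := Finset.mem_product.mp hp'.1
          exact Finset.mem_product.mpr
            ⟨((hblocks B hB).2 p.1 hpp.1).1, ((hblocks B hB).2 p.2 hpp.2).1⟩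
        have hpart := partition_filter ((B ×ˢ B).filter (fun p => p.1 ≠ p.2)).val (A ×ˢ A)
          (fun p => (p.1.1, p.2.1)) hmem
        calc diffs2 B
            = (∑ q ∈ A ×ˢ A, ((B ×ˢ B).filter (fun p => p.1 ≠ p.2)).val.filter
                (fun p => (p.1.1, p.2.1) = q)).map
                  (fun p => (p.1.1 - p.2.1, p.1.2 - p.2.2)) := by
              rw [hpart]; rfl
          _ = ∑ q ∈ A ×ˢ A, (((B ×ˢ B).filter (fun p => p.1 ≠ p.2)).val.filter
                (fun p => (p.1.1, p.2.1) = q)).map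
                  (fun p => (p.1.1 - p.2.1, p.1.2 - p.2.2)) :=
              map_sum (Multiset.mapAddMonoidHom _) _ _
          _ = _ := by
              refine Finset.sum_congr rfl (fun q hq => ?_)
              have hfe : ((B ×ˢ B).filter (fun p => p.1 ≠ p.2)).val.filter
                  (fun p => (p.1.1, p.2.1) = q)
                  = ((B ×ˢ B).filter
                      (fun p => p.1.1 = q.1 ∧ p.2.1 = q.2 ∧ p.1 ≠ p.2)).val := by
                rw [Finset.filter_val, Finset.filter_val, Multiset.filter_filter]
                exact Multiset.filter_congr (fun p _ => by
                  simp [Prod.ext_iff, and_assoc])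
              rw [hfe, Multiset.map_map]
              refine Multiset.map_congr rfl (fun p hp => ?_)
              have hp' := Finset.mem_filter.mp hp
              simp only [Function.comp_apply, hp'.2.1, hp'.2.2.1]
      -- Sum over all blocks of the SPGDD.
      calc ((f A).map diffs2).sum
          = ((f A).map (fun B => ∑ q ∈ A ×ˢ A,
              (((B ×ˢ B).filter (fun p => p.1.1 = q.1 ∧ p.2.1 = q.2 ∧ p.1 ≠ p.2)).val.map
                (fun p => p.1.2 - p.2.2)).map (fun e => (q.1 - q.2, e)))).sum := by
            congr 1
            exact Multiset.map_congr rfl hblock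
        _ = ∑ q ∈ A ×ˢ A, ((f A).map (fun B =>
              (((B ×ˢ B).filter (fun p => p.1.1 = q.1 ∧ p.2.1 = q.2 ∧ p.1 ≠ p.2)).val.map
                (fun p => p.1.2 - p.2.2)).map (fun e => (q.1 - q.2, e)))).sum :=
            msum_finsum _ _ _
        _ = ∑ q ∈ A ×ˢ A, (deltaIJ q.1 q.2 (f A)).map (fun e => (q.1 - q.2, e)) := by
            refine Finset.sum_congr rfl (fun q _ => ?_)
            rw [deltaIJ, map_msum, Multiset.map_map]
            rfl
        _ = ∑ q ∈ A ×ˢ A, (if q.1 ≠ q.2 then F (q.1 - q.2) else 0) := by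
            refine Finset.sum_congr rfl (fun q hq => ?_)
            obtain ⟨hq1, hq2⟩ := Finset.mem_product.mp hq
            by_cases h : q.1 = q.2
            · rw [(hdelta q.1 hq1 q.2 hq2).2 h]
              simp [h]
            · rw [(hdelta q.1 hq1 q.2 hq2).1 h]
              simp [h, hF]
        _ = ∑ q ∈ (A ×ˢ A).filter (fun q => q.1 ≠ q.2), F (q.1 - q.2) :=
            (Finset.sum_filter _ _).symm
        _ = (diffs1 A).bind F := by
            rw [diffs1, Multiset.bind_map, finsum_eq_bind, Finset.filter_val]
    -- Put everything together.
    calc ((𝓐.bind f).map diffs2).sum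
        = (𝓐.map (fun A => ((f A).map diffs2).sum)).sum := sum_map_bind _ _ _
      _ = (𝓐.map (fun A => (diffs1 A).bind F)).sum :=
          congrArg Multiset.sum (Multiset.map_congr rfl key)
      _ = ((𝓐.map diffs1).sum).bind F := by
          rw [msum_bind, Multiset.map_map]
          rfl
      _ = (((iv n) \ (H.image (r * ·))) ×ˢ iv m).val := by
          rw [hAdiff, Finset.product_val]
          rfl
end

section
/- Suppose there exists a generalized (n × m, K, 1)-PDP 𝓕 with leave H1^{r1} × H2^{r2}, and a generalized (H1 × H2, L, 1)-PDP 𝓐 with leave T1^{s1} × T2^{s2}. Then scaling each block of 𝓐 coordinate-wise by (r1, r2) and adjoining these blocks to 𝓕 yields a generalized (n × m, K ∪ L, 1)-PDP with leave T1^{r1 s1} × T2^{r2 s2}. Moreover, if 𝓐 is a PDF (leave {(0,0)}), the result is a generalized (n × m, K ∪ L, 1)-PDF. -/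
open Finset

lemma prodImage {α β γ δ : Type*} [DecidableEq α] [DecidableEq β] [DecidableEq γ] [DecidableEq δ]
    (f : α → γ) (g : β → δ) (s : Finset α) (t : Finset β) :
    (s ×ˢ t).image (fun p => (f p.1, g p.2)) = s.image f ×ˢ t.image g := by
  ext ⟨a, b⟩
  simp only [Finset.mem_image, Finset.mem_product, Prod.ext_iff]
  constructor
  · rintro ⟨⟨x, y⟩, ⟨hx, hy⟩, h1, h2⟩; exact ⟨⟨x, hx, h1⟩, ⟨y, hy, h2⟩⟩
  · rintro ⟨⟨x, hx, h1⟩, ⟨y, hy, h2⟩⟩; exact ⟨(x, y), ⟨hx, hy⟩, h1, h2⟩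

lemma phiInj {r1 r2 : ℤ} (h1 : r1 ≠ 0) (h2 : r2 ≠ 0) :
    Function.Injective (fun p : ℤ × ℤ => (r1 * p.1, r2 * p.2)) := by
  rintro ⟨a, b⟩ ⟨c, d⟩ h
  simp only [Prod.mk.injEq] at h
  exact Prod.ext (mul_left_cancel₀ h1 h.1) (mul_left_cancel₀ h2 h.2)

lemma diffs2_image {r1 r2 : ℤ} (h1 : r1 ≠ 0) (h2 : r2 ≠ 0) (A : Finset (ℤ × ℤ)) :
    diffs2 (A.image (fun p => (r1 * p.1, r2 * p.2))) =
      (diffs2 A).map (fun p => (r1 * p.1, r2 * p.2)) := by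
  have hinj : Function.Injective (fun p : ℤ × ℤ => (r1 * p.1, r2 * p.2)) := phiInj h1 h2
  have hΦinj : Function.Injective
      (fun q : (ℤ×ℤ)×(ℤ×ℤ) => ((r1 * q.1.1, r2 * q.1.2), (r1 * q.2.1, r2 * q.2.2))) := by
    rintro ⟨a, b⟩ ⟨c, d⟩ h
    simp only [Prod.mk.injEq] at h
    exact Prod.ext (hinj (Prod.ext h.1.1 h.1.2)) (hinj (Prod.ext h.2.1 h.2.2))
  have hprod : (A.image (fun p : ℤ×ℤ => (r1 * p.1, r2 * p.2))) ×ˢ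
        (A.image (fun p : ℤ×ℤ => (r1 * p.1, r2 * p.2))) =
      (A ×ˢ A).image
        (fun q : (ℤ×ℤ)×(ℤ×ℤ) => ((r1 * q.1.1, r2 * q.1.2), (r1 * q.2.1, r2 * q.2.2))) := by
    rw [← prodImage (fun p : ℤ×ℤ => (r1 * p.1, r2 * p.2)) (fun p : ℤ×ℤ => (r1 * p.1, r2 * p.2))]
  unfold diffs2
  rw [hprod, Finset.filter_image]
  have hfc : ((A ×ˢ A).filter fun a =>
      ((fun q : (ℤ×ℤ)×(ℤ×ℤ) => ((r1 * q.1.1, r2 * q.1.2), (r1 * q.2.1, r2 * q.2.2))) a).1 ≠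
      ((fun q : (ℤ×ℤ)×(ℤ×ℤ) => ((r1 * q.1.1, r2 * q.1.2), (r1 * q.2.1, r2 * q.2.2))) a).2) =
      (A ×ˢ A).filter (fun p => p.1 ≠ p.2) := by
    apply Finset.filter_congr
    rintro ⟨x, y⟩ _
    exact not_congr hinj.eq_iff
  rw [hfc, Finset.image_val_of_injOn (hΦinj.injOn), Multiset.map_map, Multiset.map_map]
  congr 1
  funext q
  obtain ⟨⟨a, b⟩, ⟨c, d⟩⟩ := q
  simp only [Function.comp_apply]
  rw [mul_sub r1, mul_sub r2]

/-- Construction 3.1: given a generalized `(n × m, K, 1)`-PDP `𝓕` with leave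
`H₁^{r₁} × H₂^{r₂}` and a generalized `(H₁ × H₂, L, 1)`-PDP `𝓐` with leave
`T₁^{s₁} × T₂^{s₂}`, scaling each block of `𝓐` coordinate-wise by `(r₁, r₂)` and
adjoining those blocks to `𝓕` yields a generalized `(n × m, K ∪ L, 1)`-PDP with
leave `T₁^{r₁s₁} × T₂^{r₂s₂}`; if moreover `𝓐` is a PDF (leave `{(0,0)}`), the
result is a generalized `(n × m, K ∪ L, 1)`-PDF. -/
theorem stmt19 (n m : ℕ) (hn : Odd n) (hm : Odd m) (K L : Set ℕ)
    (H1 H2 T1 T2 : Finset ℤ) (r1 r2 s1 s2 : ℤ)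
    (hr1 : 0 < r1) (hr2 : 0 < r2) (hs1 : 0 < s1) (hs2 : 0 < s2)
    (𝓕 𝓐 : Multiset (Finset (ℤ × ℤ)))
    (hHsub : (H1.image (r1 * ·)) ×ˢ (H2.image (r2 * ·)) ⊆ grid n m)
    (hTsub : (T1.image (s1 * ·)) ×ˢ (T2.image (s2 * ·)) ⊆ H1 ×ˢ H2)
    (hF1 : ∀ B ∈ 𝓕, B.card ∈ K ∧ B ⊆ grid n m)
    (hF2 : (𝓕.map diffs2).sum =
      ((grid n m) \ ((H1.image (r1 * ·)) ×ˢ (H2.image (r2 * ·)))).val)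
    (hA1 : ∀ A ∈ 𝓐, A.card ∈ L ∧ A ⊆ H1 ×ˢ H2)
    (hA2 : (𝓐.map diffs2).sum =
      ((H1 ×ˢ H2) \ ((T1.image (s1 * ·)) ×ˢ (T2.image (s2 * ·)))).val) :
    (∀ B ∈ 𝓕 + 𝓐.map (fun A => A.image (fun p => (r1 * p.1, r2 * p.2))),
        B.card ∈ K ∪ L ∧ B ⊆ grid n m) ∧
    ((𝓕 + 𝓐.map (fun A => A.image (fun p => (r1 * p.1, r2 * p.2)))).map diffs2).sum =
      ((grid n m) \ ((T1.image (r1 * s1 * ·)) ×ˢ (T2.image (r2 * s2 * ·)))).val ∧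
    (T1 = {0} → T2 = {0} →
      ((𝓕 + 𝓐.map (fun A => A.image (fun p => (r1 * p.1, r2 * p.2)))).map diffs2).sum =
        (grid n m).val.erase (0, 0)) := by
  set φ := fun p : ℤ × ℤ => (r1 * p.1, r2 * p.2) with hφ
  have hr1' : r1 ≠ 0 := hr1.ne'
  have hr2' : r2 ≠ 0 := hr2.ne'
  have hinj : Function.Injective φ := phiInj hr1' hr2'
  -- image of H1 × H2 under φ
  have hHim : (H1 ×ˢ H2).image φ = (H1.image (r1 * ·)) ×ˢ (H2.image (r2 * ·)) :=
    prodImage _ _ _ _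
  -- image of T-leave under φ
  have hTim : ((T1.image (s1 * ·)) ×ˢ (T2.image (s2 * ·))).image φ =
      (T1.image (r1 * s1 * ·)) ×ˢ (T2.image (r2 * s2 * ·)) := by
    rw [prodImage, Finset.image_image, Finset.image_image]
    congr 1 <;> apply Finset.image_congr <;> intro x _ <;>
      simp [Function.comp, mul_assoc]
  -- key subset chain
  have hT'sub : (T1.image (r1 * s1 * ·)) ×ˢ (T2.image (r2 * s2 * ·)) ⊆
      (H1.image (r1 * ·)) ×ˢ (H2.image (r2 * ·)) := by
    rw [← hTim, ← hHim]
    exact Finset.image_subset_image hTsub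
  have hmapgen : ∀ s : Multiset (Finset (ℤ × ℤ)),
      (s.map (diffs2 ∘ fun A => A.image φ)).sum = ((s.map diffs2).sum).map φ := by
    intro s
    induction s using Multiset.induction with
    | empty => simp
    | cons a t ih =>
      simp only [Multiset.map_cons, Multiset.sum_cons, Multiset.map_add]
      simp only [Function.comp_def] at ih ⊢
      rw [diffs2_image hr1' hr2' a, ih]
  -- part 1
  refine ⟨?_, ?_, ?_⟩
  · intro B hB
    rw [Multiset.mem_add] at hB
    rcases hB with hB | hB
    · exact ⟨Or.inl (hF1 B hB).1, (hF1 B hB).2⟩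
    · rw [Multiset.mem_map] at hB
      obtain ⟨A, hA, rfl⟩ := hB
      refine ⟨Or.inr ?_, ?_⟩
      · rw [Finset.card_image_of_injective _ hinj]; exact (hA1 A hA).1
      · calc A.image φ ⊆ (H1 ×ˢ H2).image φ := Finset.image_subset_image (hA1 A hA).2
          _ = _ := hHim
          _ ⊆ grid n m := hHsub
  · -- main sum computation
    rw [Multiset.map_add, Multiset.sum_add, hF2, Multiset.map_map]
    rw [hmapgen 𝓐, hA2]
    -- map φ of the sdiff val
    have hsd : (((H1 ×ˢ H2) \ ((T1.image (s1 * ·)) ×ˢ (T2.image (s2 * ·)))).val).map φ =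
        (((H1.image (r1 * ·)) ×ˢ (H2.image (r2 * ·))) \
          ((T1.image (r1 * s1 * ·)) ×ˢ (T2.image (r2 * s2 * ·)))).val := by
      rw [← hHim, ← hTim, ← Finset.image_sdiff _ _ hinj,
        Finset.image_val_of_injOn hinj.injOn]
    rw [hsd, Finset.sdiff_val, Finset.sdiff_val, Finset.sdiff_val]
    exact tsub_add_tsub_cancel (Finset.val_le_iff.2 hHsub) (Finset.val_le_iff.2 hT'sub)
  · -- PDF case
    intro h1 h2
    rw [Multiset.map_add, Multiset.sum_add, hF2, Multiset.map_map]
    rw [hmapgen 𝓐, hA2]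
    have hsd : (((H1 ×ˢ H2) \ ((T1.image (s1 * ·)) ×ˢ (T2.image (s2 * ·)))).val).map φ =
        (((H1.image (r1 * ·)) ×ˢ (H2.image (r2 * ·))) \
          ((T1.image (r1 * s1 * ·)) ×ˢ (T2.image (r2 * s2 * ·)))).val := by
      rw [← hHim, ← hTim, ← Finset.image_sdiff _ _ hinj,
        Finset.image_val_of_injOn hinj.injOn]
    rw [hsd, Finset.sdiff_val, Finset.sdiff_val]
    have hsum : (grid n m).val - ((H1.image (r1 * ·)) ×ˢ (H2.image (r2 * ·))).val +
        (((H1.image (r1 * ·)) ×ˢ (H2.image (r2 * ·))).val -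
          ((T1.image (r1 * s1 * ·)) ×ˢ (T2.image (r2 * s2 * ·))).val) =
        (grid n m).val - ((T1.image (r1 * s1 * ·)) ×ˢ (T2.image (r2 * s2 * ·))).val :=
      tsub_add_tsub_cancel (Finset.val_le_iff.2 hHsub) (Finset.val_le_iff.2 hT'sub)
    rw [hsum]
    have hT1 : T1.image (r1 * s1 * ·) = ({0} : Finset ℤ) := by
      rw [h1]; simp
    have hT2 : T2.image (r2 * s2 * ·) = ({0} : Finset ℤ) := by
      rw [h2]; simp
    rw [hT1, hT2]
    have : ({0} : Finset ℤ) ×ˢ ({0} : Finset ℤ) = {((0 : ℤ), (0 : ℤ))} := by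
      ext ⟨a, b⟩; simp [Prod.ext_iff]
    rw [this, ← Finset.sdiff_val, Finset.sdiff_singleton_eq_erase, Finset.erase_val]
end
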